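/- Let F : ℝ≥0 → ℝ≥0 be differentiable with F ∈ L¹(ℝ≥0), and suppose t ↦ F(t) + (η/τ)e^{−τt} is non-increasing for some constants η, τ > 0. Then F(t) = o(t^{−1}) as t → ∞; in particular √F(t) = o(t^{−1/2}). -/

import Mathlib

open MeasureTheory Filter Asymptotics Topology Set Real

/-! Up to a perturbation of size `|η/τ| e^{-τt/2}`, `F` is non-increasing on `[t/2, t]`, so `F t` is
at most the mean of `F` over `[t/2, t]` plus that perturbation:
`t F(t) ≤ 2 ∫_{t/2}^t F + t |η/τ| e^{-τt/2}`. Integrability of `F` makes the integral over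
`[t/2, t]` tend to `0`, hence `t F(t) → 0`, and taking square roots gives the second claim. -/

theorem tendsto_intervalIntegral_half_zero {f : ℝ → ℝ} {a : ℝ} (hf : IntegrableOn f (Ioi a)) :
    Tendsto (fun t => ∫ s in t / 2..t, f s) atTop (𝓝 0) := by
  have hhalf : Tendsto (fun t : ℝ => t / 2) atTop atTop := tendsto_id.atTop_div_const two_pos
  have hdiff := (intervalIntegral_tendsto_integral_Ioi a hf tendsto_id).sub
    (intervalIntegral_tendsto_integral_Ioi a hf hhalf)
  rw [sub_self] at hdiff
  refine hdiff.congr' ?_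
  filter_upwards [eventually_ge_atTop a, eventually_ge_atTop (2 * a)] with t ht ht'
  have hint : ∀ b, a ≤ b → IntervalIntegrable f volume a b := fun b hb =>
    (intervalIntegrable_iff_integrableOn_Ioc_of_le hb).2 (hf.mono_set Ioc_subset_Ioi_self)
  exact intervalIntegral.integral_interval_sub_left (hint t (by linarith)) (hint _ (by linarith))

theorem mul_le_two_mul_intervalIntegral_add {f : ℝ → ℝ} {t e : ℝ} (ht : 0 ≤ t)
    (hf : IntervalIntegrable f volume (t / 2) t) (hle : ∀ s ∈ Icc (t / 2) t, f t ≤ f s + e) :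
    t * f t ≤ (2 * ∫ s in t / 2..t, f s) + t * e := by
  have h := intervalIntegral.integral_mono_on (by linarith) intervalIntegrable_const hf
    (fun s hs => sub_le_iff_le_add.2 (hle s hs))
  rw [intervalIntegral.integral_const, smul_eq_mul] at h
  have hsplit : t * f t = 2 * ((t - t / 2) * (f t - e)) + t * e := by ring
  linarith

theorem tendsto_mul_zero_of_integrableOn_of_le_add {f ε : ℝ → ℝ} {a : ℝ}
    (hf : IntegrableOn f (Ioi a)) (hf0 : ∀ᶠ t in atTop, 0 ≤ f t)
    (hε : Tendsto (fun t => t * ε t) atTop (𝓝 0))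
    (hle : ∀ᶠ t in atTop, ∀ s ∈ Icc (t / 2) t, f t ≤ f s + ε t) :
    Tendsto (fun t => t * f t) atTop (𝓝 0) := by
  have hbound : Tendsto (fun t => (2 * ∫ s in t / 2..t, f s) + t * ε t) atTop (𝓝 0) := by
    simpa only [mul_zero, add_zero] using ((tendsto_intervalIntegral_half_zero hf).const_mul 2).add hε
  refine tendsto_of_tendsto_of_tendsto_of_le_of_le' tendsto_const_nhds hbound ?_ ?_
  · filter_upwards [hf0, eventually_ge_atTop 0] with t hft ht using mul_nonneg ht hft
  · filter_upwards [hle, eventually_ge_atTop 0, eventually_gt_atTop (2 * a)] with t hle ht ht'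
    refine mul_le_two_mul_intervalIntegral_add (by linarith) ?_ hle
    exact (intervalIntegrable_iff_integrableOn_Icc_of_le (by linarith)).2
      (hf.mono_set fun s hs => show a < s by linarith [hs.1])

theorem le_add_abs_mul_exp_of_antitoneOn {f : ℝ → ℝ} {c τ : ℝ} (hτ : 0 ≤ τ)
    (hmono : AntitoneOn (fun t => f t + c * exp (-τ * t)) (Ici 0)) {s t : ℝ} (ht : 0 ≤ t)
    (hs : s ∈ Icc (t / 2) t) : f t ≤ f s + |c| * exp (-τ * (t / 2)) := by
  have hmono_st := hmono (show 0 ≤ s by linarith [hs.1]) ht hs.2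
  have hexp_st : exp (-τ * t) ≤ exp (-τ * s) := exp_le_exp.2 (by nlinarith [hs.2])
  have hexp_s : exp (-τ * s) ≤ exp (-τ * (t / 2)) := exp_le_exp.2 (by nlinarith [hs.1])
  have hperturb : c * (exp (-τ * s) - exp (-τ * t)) ≤ |c| * exp (-τ * (t / 2)) :=
    calc c * (exp (-τ * s) - exp (-τ * t)) ≤ |c| * (exp (-τ * s) - exp (-τ * t)) :=
          mul_le_mul_of_nonneg_right (le_abs_self c) (sub_nonneg.2 hexp_st)
      _ ≤ |c| * exp (-τ * (t / 2)) := by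
          gcongr
          linarith [exp_pos (-τ * t)]
  simp only at hmono_st
  linarith

theorem isLittleO_inv_of_tendsto_mul {α 𝕜 : Type*} [NormedField 𝕜] {l : Filter α} {f g : α → 𝕜}
    (hg : ∀ᶠ x in l, g x ≠ 0) (h : Tendsto (fun x => g x * f x) l (𝓝 0)) :
    f =o[l] fun x => (g x)⁻¹ := by
  rw [isLittleO_iff_tendsto' (hg.mono fun x hx hx' => absurd (inv_eq_zero.1 hx') hx)]
  simpa only [div_inv_eq_mul, mul_comm] using h

theorem perturbed_monotone_integrable_decay_general
    (F : ℝ → ℝ) (η τ : ℝ) (hτ : 0 < τ)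
    (hF : ∀ t, 0 ≤ t → 0 ≤ F t)
    (hFint : IntegrableOn F (Set.Ici (0:ℝ)))
    (hmono : AntitoneOn (fun t => F t + (η/τ) * Real.exp (-τ * t)) (Set.Ici 0)) :
    F =o[atTop] (fun t : ℝ => t⁻¹) ∧
      (fun t => Real.sqrt (F t)) =o[atTop] (fun t : ℝ => (Real.sqrt t)⁻¹) := by
  have hexp : Tendsto (fun t => t * (|η / τ| * exp (-τ * (t / 2)))) atTop (𝓝 0) := by
    have h := (tendsto_rpow_mul_exp_neg_mul_atTop_nhds_zero 1 (τ / 2) (half_pos hτ)).const_mul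
      |η / τ|
    simp only [rpow_one, mul_zero] at h
    refine h.congr fun t => ?_
    ring_nf
  have htF : Tendsto (fun t => t * F t) atTop (𝓝 0) :=
    tendsto_mul_zero_of_integrableOn_of_le_add (hFint.mono_set Ioi_subset_Ici_self)
      (eventually_atTop.2 ⟨0, hF⟩) hexp
      (eventually_atTop.2 ⟨0, fun t ht s hs => le_add_abs_mul_exp_of_antitoneOn hτ.le hmono ht hs⟩)
  refine ⟨isLittleO_inv_of_tendsto_mul (eventually_ne_atTop 0) htF,
    isLittleO_inv_of_tendsto_mul ?_ ?_⟩
  · filter_upwards [eventually_gt_atTop 0] with t ht using (sqrt_pos.2 ht).ne'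
  · have h := (continuous_sqrt.tendsto 0).comp htF
    rw [Function.comp_def, sqrt_zero] at h
    refine h.congr' ?_
    filter_upwards [eventually_ge_atTop 0] with t ht using sqrt_mul ht _

theorem perturbed_monotone_integrable_decay
    (F : ℝ → ℝ) (η τ : ℝ) (hη : 0 < η) (hτ : 0 < τ)
    (hdiff : ∀ t, 0 ≤ t → DifferentiableAt ℝ F t)
    (hF : ∀ t, 0 ≤ t → 0 ≤ F t)
    (hFint : IntegrableOn F (Set.Ici (0:ℝ)))
    (hmono : AntitoneOn (fun t => F t + (η/τ) * Real.exp (-τ * t)) (Set.Ici 0)) :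
    F =o[atTop] (fun t : ℝ => t⁻¹) ∧
      (fun t => Real.sqrt (F t)) =o[atTop] (fun t : ℝ => (Real.sqrt t)⁻¹) :=
  perturbed_monotone_integrable_decay_general F η τ hτ hF hFint hmono
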